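/- Let Ω ⊆ ℝ^d be open and bounded, and let y, yₙ : Ω̄ → ℝ^d be continuous maps such that yₙ → y uniformly on Ω̄ and each restriction yₙ|_Ω : Ω → yₙ(Ω) and y|_Ω : Ω → y(Ω) is a homeomorphism onto its (open) image. Then d_H(closure(yₙ(Ω)), closure(y(Ω))) → 0 and d_H(∂ yₙ(Ω), ∂ y(Ω)) → 0 as n → ∞. -/

import Mathlib

open Metric Set Filter Topology

variable {d : ℕ}

/-- `y` restricted to the open set `Ω` is a homeomorphism onto its (open) image:
it is injective on `Ω`, continuous there, and maps open subsets of `Ω` to open sets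
(in particular `y(Ω)` is open and the inverse is continuous). -/
def IsHomeoOntoImage (y : EuclideanSpace ℝ (Fin d) → EuclideanSpace ℝ (Fin d))
    (Ω : Set (EuclideanSpace ℝ (Fin d))) : Prop :=
  Set.InjOn y Ω ∧ ContinuousOn y Ω ∧
    ∀ U ⊆ Ω, IsOpen U → IsOpen (y '' U)

/-!
If `sup_K |f - g| ≤ ε` then `d_H(f(K), g(K)) ≤ ε`, so uniform convergence on `Ω̄` gives
Hausdorff convergence of the images of `Ω̄` and of `∂Ω`. It remains to identify these images.
As `Ω̄` is compact, `f(Ω̄)` is closed, hence equal to `closure f(Ω)`. For the boundary, the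
only thing to rule out is a point `p ∈ ∂Ω` with `f p = f a`, `a ∈ Ω`: separate `p` and `a`
by disjoint open sets `U ∋ p`, `V ∋ a`; then `f(V ∩ Ω)` is an open neighbourhood of `f p`,
so by continuity some `z ∈ U ∩ Ω` has `f z ∈ f(V ∩ Ω)`, and injectivity puts `z` in `V`.
-/

theorem Metric.hausdorffDist_image_le_of_dist_le {α β : Type*} [PseudoMetricSpace β]
    {f g : α → β} {s : Set α} {r : ℝ} (hr : 0 ≤ r) (h : ∀ x ∈ s, dist (f x) (g x) ≤ r) :
    hausdorffDist (f '' s) (g '' s) ≤ r := by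
  refine hausdorffDist_le_of_mem_dist hr ?_ ?_
  · rintro _ ⟨x, hx, rfl⟩
    exact ⟨g x, mem_image_of_mem g hx, h x hx⟩
  · rintro _ ⟨x, hx, rfl⟩
    exact ⟨f x, mem_image_of_mem f hx, dist_comm (g x) (f x) ▸ h x hx⟩

theorem TendstoUniformlyOn.tendsto_hausdorffDist_image {ι α β : Type*} [PseudoMetricSpace β]
    {F : ι → α → β} {f : α → β} {p : Filter ι} {s : Set α} (h : TendstoUniformlyOn F f p s) :
    Tendsto (fun n => hausdorffDist (F n '' s) (f '' s)) p (𝓝 0) := by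
  rw [Metric.tendsto_nhds]
  intro ε hε
  filter_upwards [Metric.tendstoUniformlyOn_iff.1 h (ε / 2) (half_pos hε)] with n hn
  have hle : hausdorffDist (F n '' s) (f '' s) ≤ ε / 2 :=
    hausdorffDist_image_le_of_dist_le (half_pos hε).le fun x hx => by
      rw [dist_comm]
      exact (hn x hx).le
  rw [Real.dist_0_eq_abs, abs_of_nonneg hausdorffDist_nonneg]
  linarith

section Frontier

variable {X Y : Type*} [TopologicalSpace X] [TopologicalSpace Y] {f : X → Y} {s : Set X}

theorem disjoint_image_frontier_image [T2Space X] (hs : IsOpen s)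
    (hf : ContinuousOn f (closure s)) (hinj : InjOn f s)
    (hopen : ∀ U ⊆ s, IsOpen U → IsOpen (f '' U)) :
    Disjoint (f '' frontier s) (f '' s) := by
  rw [disjoint_left]
  rintro _ ⟨p, hp, rfl⟩ ⟨a, ha, hap⟩
  have hpa : p ≠ a := fun h => (hs.frontier_eq ▸ hp).2 (h ▸ ha)
  obtain ⟨U, V, hU, hV, hpU, haV, hUV⟩ := t2_separation hpa
  have hcont : Tendsto f (𝓝[s] p) (𝓝 (f p)) :=
    (hf p (frontier_subset_closure hp)).tendsto.mono_left (nhdsWithin_mono p subset_closure)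
  have hnhds : f '' (V ∩ s) ∈ 𝓝 (f p) :=
    (hopen _ inter_subset_right (hV.inter hs)).mem_nhds (hap ▸ mem_image_of_mem f ⟨haV, ha⟩)
  have : (𝓝[s] p).NeBot := mem_closure_iff_nhdsWithin_neBot.1 (frontier_subset_closure hp)
  have hnearU : ∀ᶠ z in 𝓝[s] p, z ∈ U := mem_nhdsWithin_of_mem_nhds (hU.mem_nhds hpU)
  obtain ⟨z, ⟨w, ⟨hwV, hws⟩, hwz⟩, hzU, hzs⟩ :=
    ((hcont.eventually_mem hnhds).and (hnearU.and eventually_mem_nhdsWithin)).exists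
  exact hUV.ne_of_mem hzU hwV (hinj hzs hws hwz.symm)

theorem frontier_image_eq_image_frontier [T2Space X] [T2Space Y] (hs : IsOpen s)
    (hcpt : IsCompact (closure s)) (hf : ContinuousOn f (closure s)) (hinj : InjOn f s)
    (hopen : ∀ U ⊆ s, IsOpen U → IsOpen (f '' U)) :
    frontier (f '' s) = f '' frontier s := by
  rw [(hopen s Subset.rfl hs).frontier_eq, ← image_closure_of_isCompact hcpt hf,
    closure_eq_self_union_frontier, image_union, union_sdiff_left,
    (disjoint_image_frontier_image hs hf hinj hopen).sdiff_eq_left]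

end Frontier

theorem hausdorff_convergence_of_images_general (Ω : Set (EuclideanSpace ℝ (Fin d)))
    (hΩo : IsOpen Ω) (hΩb : Bornology.IsBounded Ω)
    (y : EuclideanSpace ℝ (Fin d) → EuclideanSpace ℝ (Fin d))
    (yn : ℕ → EuclideanSpace ℝ (Fin d) → EuclideanSpace ℝ (Fin d))
    (hy : ContinuousOn y (closure Ω)) (hyn : ∀ n, ContinuousOn (yn n) (closure Ω))
    (hunif : TendstoUniformlyOn yn y atTop (closure Ω))
    (hhomeo : IsHomeoOntoImage y Ω) (hhomeon : ∀ n, IsHomeoOntoImage (yn n) Ω) :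
    Tendsto (fun n => Metric.hausdorffDist (closure (yn n '' Ω)) (closure (y '' Ω)))
        atTop (𝓝 0) ∧
    Tendsto (fun n => Metric.hausdorffDist (frontier (yn n '' Ω)) (frontier (y '' Ω)))
        atTop (𝓝 0) := by
  have hcpt : IsCompact (closure Ω) := hΩb.isCompact_closure
  constructor
  · simpa only [image_closure_of_isCompact hcpt (hyn _), image_closure_of_isCompact hcpt hy]
      using hunif.tendsto_hausdorffDist_image
  · simpa only [frontier_image_eq_image_frontier hΩo hcpt (hyn _) (hhomeon _).1 (hhomeon _).2.2,
      frontier_image_eq_image_frontier hΩo hcpt hy hhomeo.1 hhomeo.2.2]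
      using (hunif.mono frontier_subset_closure).tendsto_hausdorffDist_image

/-- Hausdorff convergence of intermediate configurations: if `yₙ → y` uniformly on `Ω̄`
and all restrictions to `Ω` are homeomorphisms onto their images, then the closures of
the images and the boundaries of the images converge in Hausdorff distance. -/
theorem hausdorff_convergence_of_images (Ω : Set (EuclideanSpace ℝ (Fin d)))
    (hΩo : IsOpen Ω) (hΩb : Bornology.IsBounded Ω) (hΩne : Ω.Nonempty)
    (y : EuclideanSpace ℝ (Fin d) → EuclideanSpace ℝ (Fin d))
    (yn : ℕ → EuclideanSpace ℝ (Fin d) → EuclideanSpace ℝ (Fin d))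
    (hy : ContinuousOn y (closure Ω)) (hyn : ∀ n, ContinuousOn (yn n) (closure Ω))
    (hunif : TendstoUniformlyOn yn y atTop (closure Ω))
    (hhomeo : IsHomeoOntoImage y Ω) (hhomeon : ∀ n, IsHomeoOntoImage (yn n) Ω) :
    Tendsto (fun n => Metric.hausdorffDist (closure (yn n '' Ω)) (closure (y '' Ω)))
        atTop (𝓝 0) ∧
    Tendsto (fun n => Metric.hausdorffDist (frontier (yn n '' Ω)) (frontier (y '' Ω)))
        atTop (𝓝 0) :=
  hausdorff_convergence_of_images_general Ω hΩo hΩb y yn hy hyn hunif hhomeo hhomeon
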